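/- Let d ≥ 1, let Ω ⊆ ℝ^d be open, let r, r' > 1 be conjugate exponents, let ν, h₀ > 0, let m : Ω → ℝ be C¹ with m(x) > 0 for all x, and let u : Ω → ℝ be differentiable. Assume that for every x ∈ Ω: ν ∇m(x) + h₀ m(x) |∇u(x)|^{r'-2} ∇u(x) = 0. Define φ := m^{1/r}. Then φ is C¹ on Ω and for every x ∈ Ω: ν r ∇φ(x) = -h₀ φ(x) |∇u(x)|^{r'-2} ∇u(x), and moreover |∇φ(x)|^{r-2} ∇φ(x) = -(h₀/(ν r))^{r-1} φ(x)^{r-1} ∇u(x). -/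

import Mathlib

/-!
Writing `φ = m^{1/r}`, the chain rule gives `∇φ = (1/r) m^{1/r - 1} ∇m`, and the flux balance
expresses `∇m` through `m |∇u|^{r'-2} ∇u`; the powers of `m` recombine to `φ`, which is the first
relation. For the second, apply the `r`-Laplacian flux `v ↦ |v|^{r-2} v` to both sides: it is
positively homogeneous of degree `r - 1`, and for conjugate exponents it inverts the `r'`-Laplacian
flux, because `(r' - 1)(r - 2) + r' - 2 = r r' - r - r' = 0`.
-/

theorem HasGradientAt.rpow_const {F : Type*} [NormedAddCommGroup F] [InnerProductSpace ℝ F]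
    [CompleteSpace F] {f : F → ℝ} {f' x : F} {p : ℝ} (hf : HasGradientAt f f' x)
    (h : f x ≠ 0 ∨ 1 ≤ p) :
    HasGradientAt (fun y => f y ^ p) ((p * f x ^ (p - 1)) • f') x := by
  rw [hasGradientAt_iff_hasFDerivAt, map_smul]
  exact hf.hasFDerivAt.rpow_const h

section PLaplacianFlux

variable {E : Type*} [NormedAddCommGroup E] [NormedSpace ℝ E]

noncomputable def pLaplacianFlux (p : ℝ) (v : E) : E := ‖v‖ ^ (p - 2) • v

theorem pLaplacianFlux_zero (p : ℝ) : pLaplacianFlux p (0 : E) = 0 := by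
  simp [pLaplacianFlux]

theorem pLaplacianFlux_neg (p : ℝ) (v : E) : pLaplacianFlux p (-v) = -pLaplacianFlux p v := by
  simp [pLaplacianFlux]

theorem pLaplacianFlux_smul_of_pos (p : ℝ) {c : ℝ} (hc : 0 < c) (v : E) :
    pLaplacianFlux p (c • v) = c ^ (p - 1) • pLaplacianFlux p v := by
  simp only [pLaplacianFlux, norm_smul, Real.norm_of_nonneg hc.le, smul_smul,
    Real.mul_rpow hc.le (norm_nonneg v)]
  rw [show p - 1 = p - 2 + 1 by ring, Real.rpow_add_one hc.ne']
  ring_nf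

theorem norm_pLaplacianFlux (p : ℝ) {v : E} (hv : v ≠ 0) :
    ‖pLaplacianFlux p v‖ = ‖v‖ ^ (p - 1) := by
  rw [pLaplacianFlux, norm_smul, Real.norm_of_nonneg (by positivity),
    ← Real.rpow_add_one (norm_ne_zero_iff.mpr hv)]
  ring_nf

theorem pLaplacianFlux_pLaplacianFlux {p q : ℝ} (hpq : p.HolderConjugate q) (v : E) :
    pLaplacianFlux p (pLaplacianFlux q v) = v := by
  rcases eq_or_ne v 0 with rfl | hv
  · simp only [pLaplacianFlux_zero]
  have hexp : (q - 1) * (p - 2) + (q - 2) = 0 := by linarith [hpq.mul_eq_add]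
  have hnorm : 0 < ‖v‖ := norm_pos_iff.mpr hv
  rw [pLaplacianFlux, norm_pLaplacianFlux q hv, pLaplacianFlux, smul_smul,
    ← Real.rpow_mul hnorm.le, ← Real.rpow_add hnorm, hexp, Real.rpow_zero, one_smul]

end PLaplacianFlux

theorem gradient_rpow_of_flux_balance {F : Type*} [NormedAddCommGroup F] [InnerProductSpace ℝ F]
    [CompleteSpace F] {m : F → ℝ} {x w : F} {ν h₀ p : ℝ} (hm : DifferentiableAt ℝ m x)
    (hmx : 0 < m x) (hν : ν ≠ 0) (hp : p ≠ 0) (hflux : ν • gradient m x + (h₀ * m x) • w = 0) :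
    gradient (fun y => m y ^ (1 / p)) x = -((h₀ / (ν * p) * m x ^ (1 / p)) • w) := by
  have hgradm : gradient m x = -((h₀ / ν * m x) • w) := by
    rw [← smul_right_inj hν, smul_neg, smul_smul, eq_neg_iff_add_eq_zero]
    convert hflux using 3
    field_simp
  rw [(hm.hasGradientAt.rpow_const (Or.inl hmx.ne')).gradient, hgradm, smul_neg, smul_smul,
    Real.rpow_sub_one hmx.ne']
  congr 2
  field_simp

theorem hopf_cole_gradient_relations_general (d : ℕ)
    (Ω : Set (EuclideanSpace ℝ (Fin d))) (hΩ : IsOpen Ω)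
    (r r' ν h₀ : ℝ) (hr : 1 < r) (hconj : 1 / r + 1 / r' = 1)
    (hν : 0 < ν) (hh₀ : 0 < h₀)
    (m u : EuclideanSpace ℝ (Fin d) → ℝ)
    (hm : ContDiffOn ℝ 1 m Ω) (hmpos : ∀ x ∈ Ω, 0 < m x)
    (hflux : ∀ x ∈ Ω,
      ν • gradient m x + (h₀ * m x * ‖gradient u x‖ ^ (r' - 2)) • gradient u x = 0) :
    ContDiffOn ℝ 1 (fun x => m x ^ (1 / r)) Ω ∧
    (∀ x ∈ Ω,
      (ν * r) • gradient (fun y => m y ^ (1 / r)) x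
        = -((h₀ * m x ^ (1 / r) * ‖gradient u x‖ ^ (r' - 2)) • gradient u x)) ∧
    (∀ x ∈ Ω,
      ‖gradient (fun y => m y ^ (1 / r)) x‖ ^ (r - 2) • gradient (fun y => m y ^ (1 / r)) x
        = -(((h₀ / (ν * r)) ^ (r - 1) * (m x ^ (1 / r)) ^ (r - 1)) • gradient u x)) := by
  have hrr' : r.HolderConjugate r' :=
    Real.holderConjugate_iff.mpr ⟨hr, by simpa only [one_div] using hconj⟩
  have hgrad : ∀ x ∈ Ω, gradient (fun y => m y ^ (1 / r)) x =
      -((h₀ / (ν * r) * m x ^ (1 / r)) • pLaplacianFlux r' (gradient u x)) := fun x hx =>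
    gradient_rpow_of_flux_balance ((hm.contDiffAt (hΩ.mem_nhds hx)).differentiableAt one_ne_zero)
      (hmpos x hx) hν.ne' hrr'.ne_zero (by rw [pLaplacianFlux, smul_smul]; exact hflux x hx)
  refine ⟨hm.rpow_const_of_ne fun x hx => (hmpos x hx).ne', fun x hx => ?_, fun x hx => ?_⟩
  · rw [hgrad x hx, pLaplacianFlux, smul_neg, smul_smul, smul_smul]
    congr 2
    field_simp
  · change pLaplacianFlux r _ = _
    have hmx := hmpos x hx
    have hr0 := hrr'.pos
    have hpos : 0 < h₀ / (ν * r) * m x ^ (1 / r) := by positivity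
    rw [hgrad x hx, pLaplacianFlux_neg, pLaplacianFlux_smul_of_pos _ hpos,
      pLaplacianFlux_pLaplacianFlux hrr', Real.mul_rpow (by positivity) (by positivity)]

/-- (Core of the generalized Hopf–Cole transformation.)
Let `d ≥ 1`, `Ω ⊆ ℝ^d` open, `r, r' > 1` conjugate exponents, `ν, h₀ > 0`, `m` `C¹` and
positive on `Ω`, `u` differentiable on `Ω`, with `ν ∇m + h₀ m |∇u|^{r'-2} ∇u = 0` on `Ω`.
With `φ := m^{1/r}`: `φ` is `C¹` on `Ω`, `ν r ∇φ = -h₀ φ |∇u|^{r'-2} ∇u` on `Ω`, and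
`|∇φ|^{r-2} ∇φ = -(h₀/(νr))^{r-1} φ^{r-1} ∇u` on `Ω`. -/
theorem hopf_cole_gradient_relations (d : ℕ) (hd : 1 ≤ d)
    (Ω : Set (EuclideanSpace ℝ (Fin d))) (hΩ : IsOpen Ω)
    (r r' ν h₀ : ℝ) (hr : 1 < r) (hr' : 1 < r') (hconj : 1 / r + 1 / r' = 1)
    (hν : 0 < ν) (hh₀ : 0 < h₀)
    (m u : EuclideanSpace ℝ (Fin d) → ℝ)
    (hm : ContDiffOn ℝ 1 m Ω) (hmpos : ∀ x ∈ Ω, 0 < m x)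
    (hu : DifferentiableOn ℝ u Ω)
    (hflux : ∀ x ∈ Ω,
      ν • gradient m x + (h₀ * m x * ‖gradient u x‖ ^ (r' - 2)) • gradient u x = 0) :
    ContDiffOn ℝ 1 (fun x => m x ^ (1 / r)) Ω ∧
    (∀ x ∈ Ω,
      (ν * r) • gradient (fun y => m y ^ (1 / r)) x
        = -((h₀ * m x ^ (1 / r) * ‖gradient u x‖ ^ (r' - 2)) • gradient u x)) ∧
    (∀ x ∈ Ω,
      ‖gradient (fun y => m y ^ (1 / r)) x‖ ^ (r - 2) • gradient (fun y => m y ^ (1 / r)) x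
        = -(((h₀ / (ν * r)) ^ (r - 1) * (m x ^ (1 / r)) ^ (r - 1)) • gradient u x)) :=
  hopf_cole_gradient_relations_general d Ω hΩ r r' ν h₀ hr hconj hν hh₀ m u hm hmpos hflux
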